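/- arXiv:0709.1975 — 4 statements merged into one kernel-verified Lean document; each statement's English description precedes it below -/
import Mathlib

section
/- Let d ≥ 1 and let p_1, …, p_d ∈ ℝ^d be linearly independent unit vectors; let σ_min and σ_max denote the smallest and largest eigenvalues of the Gram matrix (⟨p_i, p_j⟩)_{i,j=1,…,d}. Then there exist constants c > 0 and c', κ > 1, depending only on d, σ_min and σ_max, such that the following holds: for every z ∈ ℝ^d, every ρ > 0, and every choice of points y_1, …, y_d ∈ ℝ^d with y_i − z a positive scalar multiple of p_i and cρ ≤ ‖y_i − z‖ ≤ 2cρ for each i, setting t = κ^{-1}ρ², the map Φ : ℝ^d → ℝ^d defined by Φ(x) = (ρ^d K_t(x, y_1), …, ρ^d K_t(x, y_d)) satisfies, for all x_1, x_2 in the ball B(z, κ^{-1}ρ), the two-sided bound (κ c')^{-1} ρ^{-1} ‖x_1 − x_2‖ ≤ ‖Φ(x_1) − Φ(x_2)‖ ≤ κ c' ρ^{-1} ‖x_1 − x_2‖. -/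
/-!
With `κ = S²` the rescaled kernel is `ρ^d K_t(x, yᵢ) = C exp (-a ‖x - yᵢ‖²)`, where
`C = (S² / 4π)^(d/2)` and `a = S² / (4ρ²)`. Writing `x - yᵢ = (x - z) - (yᵢ - z)`, the exponent
is affine in `x` up to the term `-a ‖x - z‖²`, and on the ball `‖x - z‖ ≤ ρ / S²` it stays of
size `O(1 / S)` because `‖yᵢ - z‖ ≈ ρ / S`. Hence `Φ x₁ - Φ x₂` agrees with the linear map
`v ↦ (μᵢ ⟪pᵢ, v⟫)ᵢ`, whose coefficients `μᵢ` lie between `C S / 6ρ` and `C S / ρ`, up to an error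
`20 C ‖x₁ - x₂‖ / ρ` in each coordinate that does not grow with `S`. The Gram lower bound gives the
frame inequality `σmin ‖v‖² ≤ ∑ ⟪pᵢ, v⟫²`, so the linear map expands by at least
`√σmin C S / 6ρ`, and for `S ≫ √(d / σmin)` the error is absorbed.
-/

open scoped Real RealInnerProductSpace

noncomputable def heatKernel (d : ℕ) (t : ℝ) (x y : EuclideanSpace ℝ (Fin d)) : ℝ :=
  (4 * Real.pi * t) ^ (-(d : ℝ) / 2) * Real.exp (-‖x - y‖ ^ 2 / (4 * t))

open Real

lemma abs_exp_sub_exp_sub_sub_le {α β δ : ℝ} (hα : |α| ≤ δ) (hβ : |β| ≤ δ) (hδ : δ ≤ 1 / 2) :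
    |exp α - exp β - (α - β)| ≤ 8 * δ * |α - β| := by
  have hαβ : |α - β| ≤ 2 * δ := (abs_sub _ _).trans (by linarith)
  have hquad : |exp (α - β) - 1 - (α - β)| ≤ (α - β) ^ 2 :=
    abs_exp_sub_one_sub_id_le (by linarith)
  have hlin : |exp β - 1| ≤ 2 * δ := (abs_exp_sub_one_le (by linarith)).trans (by linarith)
  have hexp : exp β ≤ 3 :=
    (exp_le_exp.2 (by linarith [le_abs_self β])).trans (exp_one_lt_d9.le.trans (by norm_num))
  have hsplit : exp α - exp β - (α - β)
      = exp β * (exp (α - β) - 1 - (α - β)) + (exp β - 1) * (α - β) := by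
    rw [exp_sub]; field_simp; ring
  have hsq : (α - β) ^ 2 ≤ 2 * δ * |α - β| := by
    rw [← sq_abs, sq]; exact mul_le_mul_of_nonneg_right hαβ (abs_nonneg _)
  rw [hsplit]
  calc _ ≤ exp β * (α - β) ^ 2 + 2 * δ * |α - β| := by
        refine (abs_add_le _ _).trans (add_le_add ?_ ?_)
        · rw [abs_mul, abs_of_pos (exp_pos β)]
          exact mul_le_mul_of_nonneg_left hquad (exp_pos β).le
        · rw [abs_mul]; exact mul_le_mul_of_nonneg_right hlin (abs_nonneg _)
    _ ≤ 3 * (2 * δ * |α - β|) + 2 * δ * |α - β| := by gcongr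
    _ = 8 * δ * |α - β| := by ring

lemma two_mul_mul_exp_neg_mul_sq_mul_mem_Icc {S ρ s : ℝ} (hS : 0 < S) (hρ : 0 < ρ)
    (hs : S⁻¹ * ρ ≤ s) (hs' : s ≤ 2 * S⁻¹ * ρ) :
    2 * (S ^ 2 / (4 * ρ ^ 2)) * exp (-(S ^ 2 / (4 * ρ ^ 2)) * s ^ 2) * s
      ∈ Set.Icc (S / (6 * ρ)) (S / ρ) := by
  have hs0 : 0 < s := lt_of_lt_of_le (by positivity) hs
  have hexponent : S ^ 2 / (4 * ρ ^ 2) * s ^ 2 ≤ 1 := by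
    calc S ^ 2 / (4 * ρ ^ 2) * s ^ 2 ≤ S ^ 2 / (4 * ρ ^ 2) * (2 * S⁻¹ * ρ) ^ 2 := by gcongr
      _ = 1 := by field_simp; norm_num
  have hexp_lower : 3⁻¹ ≤ exp (-(S ^ 2 / (4 * ρ ^ 2)) * s ^ 2) := by
    calc (3 : ℝ)⁻¹ ≤ exp (-1) := by
          rw [exp_neg]; exact inv_anti₀ (exp_pos 1) (exp_one_lt_d9.le.trans (by norm_num))
      _ ≤ _ := exp_le_exp.2 (by linarith)
  have hexp_upper : exp (-(S ^ 2 / (4 * ρ ^ 2)) * s ^ 2) ≤ 1 :=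
    exp_le_one_iff.2 (by nlinarith [sq_nonneg s, (by positivity : 0 ≤ S ^ 2 / (4 * ρ ^ 2))])
  constructor
  · calc S / (6 * ρ) = 2 * (S ^ 2 / (4 * ρ ^ 2)) * 3⁻¹ * (S⁻¹ * ρ) := by field_simp; ring
      _ ≤ _ := by gcongr
  · calc _ ≤ 2 * (S ^ 2 / (4 * ρ ^ 2)) * 1 * (2 * S⁻¹ * ρ) := by gcongr
      _ = S / ρ := by field_simp; ring

lemma abs_norm_sq_sub_norm_sq_le {E : Type*} [SeminormedAddCommGroup E] (u v : E) :
    |‖u‖ ^ 2 - ‖v‖ ^ 2| ≤ (‖u‖ + ‖v‖) * ‖u - v‖ := by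
  rw [sq_sub_sq, abs_mul, abs_of_nonneg (by positivity)]
  exact mul_le_mul_of_nonneg_left (abs_norm_sub_norm_le u v) (by positivity)

section InnerProductSpace

variable {E : Type*} [NormedAddCommGroup E] [InnerProductSpace ℝ E]

lemma norm_sub_sq_eq_norm_sq_sub (x y z : E) :
    ‖x - y‖ ^ 2 = ‖y - z‖ ^ 2 - (2 * ⟪y - z, x - z⟫ - ‖x - z‖ ^ 2) := by
  rw [show x - y = (x - z) - (y - z) by abel, norm_sub_sq_real, real_inner_comm]
  ring

lemma abs_two_inner_sub_norm_sq_le {v u : E} {s r : ℝ} (hv : ‖v‖ ≤ s) (hu : ‖u‖ ≤ r) :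
    |2 * ⟪v, u⟫ - ‖u‖ ^ 2| ≤ 2 * s * r + r ^ 2 := by
  have hvu : |⟪v, u⟫| ≤ s * r :=
    (abs_real_inner_le_norm v u).trans (mul_le_mul hv hu (norm_nonneg u) ((norm_nonneg v).trans hv))
  have hu2 : ‖u‖ ^ 2 ≤ r ^ 2 := pow_le_pow_left₀ (norm_nonneg u) hu 2
  rw [abs_le] at hvu ⊢
  constructor <;> nlinarith [sq_nonneg ‖u‖]

lemma abs_exp_sub_exp_sub_inner_le {a s r δ : ℝ} (ha : 0 ≤ a) {x₁ x₂ y z : E}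
    (hy : ‖y - z‖ ≤ s) (hx₁ : ‖x₁ - z‖ ≤ r) (hx₂ : ‖x₂ - z‖ ≤ r)
    (hδ : a * (2 * s * r + r ^ 2) ≤ δ) (hδ' : δ ≤ 1 / 2) :
    |exp (-a * ‖x₁ - y‖ ^ 2) - exp (-a * ‖x₂ - y‖ ^ 2)
        - 2 * a * exp (-a * ‖y - z‖ ^ 2) * ⟪y - z, x₁ - x₂⟫|
      ≤ 2 * a * (8 * δ * (s + r) + r) * ‖x₁ - x₂‖ := by
  set h : E → ℝ := fun x => a * (2 * ⟪y - z, x - z⟫ - ‖x - z‖ ^ 2)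
  have hfactor : ∀ x, exp (-a * ‖x - y‖ ^ 2) = exp (-a * ‖y - z‖ ^ 2) * exp (h x) := by
    intro x
    rw [← exp_add, norm_sub_sq_eq_norm_sq_sub x y z]
    congr 1
    ring
  have hsmall : ∀ x, ‖x - z‖ ≤ r → |h x| ≤ δ := fun x hx => by
    rw [abs_mul, abs_of_nonneg ha]
    exact (mul_le_mul_of_nonneg_left (abs_two_inner_sub_norm_sq_le hy hx) ha).trans hδ
  have hsub : h x₁ - h x₂ = 2 * a * ⟪y - z, x₁ - x₂⟫ - a * (‖x₁ - z‖ ^ 2 - ‖x₂ - z‖ ^ 2) := by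
    simp only [h, show x₁ - x₂ = (x₁ - z) - (x₂ - z) by abel, inner_sub_right]
    ring
  have hnorms : |‖x₁ - z‖ ^ 2 - ‖x₂ - z‖ ^ 2| ≤ 2 * r * ‖x₁ - x₂‖ := by
    refine (abs_norm_sq_sub_norm_sq_le _ _).trans ?_
    rw [show x₁ - z - (x₂ - z) = x₁ - x₂ by abel]
    exact mul_le_mul_of_nonneg_right (by linarith) (norm_nonneg _)
  have hinner : |⟪y - z, x₁ - x₂⟫| ≤ s * ‖x₁ - x₂‖ :=
    (abs_real_inner_le_norm _ _).trans (mul_le_mul_of_nonneg_right hy (norm_nonneg _))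
  have hsub_le : |h x₁ - h x₂| ≤ 2 * a * (s + r) * ‖x₁ - x₂‖ := by
    rw [hsub]
    refine (abs_sub _ _).trans ?_
    rw [abs_mul (2 * a), abs_mul a, abs_of_nonneg (by positivity : (0:ℝ) ≤ 2 * a),
      abs_of_nonneg ha]
    nlinarith [mul_le_mul_of_nonneg_left hinner (by positivity : (0:ℝ) ≤ 2 * a),
      mul_le_mul_of_nonneg_left hnorms ha]
  have hδ0 : 0 ≤ δ := (abs_nonneg _).trans (hsmall x₁ hx₁)
  have hexp := abs_exp_sub_exp_sub_sub_le (hsmall x₁ hx₁) (hsmall x₂ hx₂) hδ'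
  have hE₀ : exp (-a * ‖y - z‖ ^ 2) ≤ 1 :=
    exp_le_one_iff.2 (by nlinarith [sq_nonneg ‖y - z‖])
  rw [hfactor, hfactor, show 2 * a * exp (-a * ‖y - z‖ ^ 2) * ⟪y - z, x₁ - x₂⟫
      = exp (-a * ‖y - z‖ ^ 2) * (h x₁ - h x₂ + a * (‖x₁ - z‖ ^ 2 - ‖x₂ - z‖ ^ 2)) by
    rw [hsub]; ring]
  calc _ = |exp (-a * ‖y - z‖ ^ 2) * ((exp (h x₁) - exp (h x₂) - (h x₁ - h x₂))
          - a * (‖x₁ - z‖ ^ 2 - ‖x₂ - z‖ ^ 2))| := by congr 1; ring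
    _ = exp (-a * ‖y - z‖ ^ 2) * |(exp (h x₁) - exp (h x₂) - (h x₁ - h x₂))
          - a * (‖x₁ - z‖ ^ 2 - ‖x₂ - z‖ ^ 2)| := by rw [abs_mul, abs_of_pos (exp_pos _)]
    _ ≤ 1 * (8 * δ * |h x₁ - h x₂| + a * (2 * r * ‖x₁ - x₂‖)) := by
        gcongr
        refine (abs_sub _ _).trans (add_le_add hexp ?_)
        rw [abs_mul, abs_of_nonneg ha]
        gcongr
    _ ≤ 1 * (8 * δ * (2 * a * (s + r) * ‖x₁ - x₂‖) + a * (2 * r * ‖x₁ - x₂‖)) := by gcongr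
    _ = 2 * a * (8 * δ * (s + r) + r) * ‖x₁ - x₂‖ := by ring

lemma abs_exp_sub_exp_sub_inner_le_of_scale {S ρ : ℝ} (hS : 4 ≤ S) (hρ : 0 < ρ) {x₁ x₂ y z : E}
    (hy : ‖y - z‖ ≤ 2 * S⁻¹ * ρ) (hx₁ : ‖x₁ - z‖ ≤ (S ^ 2)⁻¹ * ρ)
    (hx₂ : ‖x₂ - z‖ ≤ (S ^ 2)⁻¹ * ρ) :
    |exp (-(S ^ 2 / (4 * ρ ^ 2)) * ‖x₁ - y‖ ^ 2) - exp (-(S ^ 2 / (4 * ρ ^ 2)) * ‖x₂ - y‖ ^ 2)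
        - 2 * (S ^ 2 / (4 * ρ ^ 2)) * exp (-(S ^ 2 / (4 * ρ ^ 2)) * ‖y - z‖ ^ 2)
          * ⟪y - z, x₁ - x₂⟫|
      ≤ 20 / ρ * ‖x₁ - x₂‖ := by
  have hS0 : 0 < S := by linarith
  refine (abs_exp_sub_exp_sub_inner_le (δ := 2 / S) (by positivity) hy hx₁ hx₂ ?_ ?_).trans ?_
  · rw [div_mul_eq_mul_div, div_le_div_iff₀ (by positivity) hS0]
    field_simp
    nlinarith
  · rw [div_le_div_iff₀ hS0 (by norm_num)]; linarith
  · gcongr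
    field_simp
    nlinarith

lemma mul_norm_sq_le_sum_inner_sq {ι : Type*} [Fintype ι] {σ : ℝ} {p : ι → E}
    (hgram : ∀ c : ι → ℝ, σ * ∑ i, c i ^ 2 ≤ ∑ i, ∑ j, c i * c j * ⟪p i, p j⟫)
    {v : E} (hv : v ∈ Submodule.span ℝ (Set.range p)) :
    σ * ‖v‖ ^ 2 ≤ ∑ i, ⟪p i, v⟫ ^ 2 := by
  obtain ⟨c, rfl⟩ := (Submodule.mem_span_range_iff_exists_fun ℝ).1 hv
  set v := ∑ i, c i • p i
  have hnorm : ‖v‖ ^ 2 = ∑ i, c i * ⟪p i, v⟫ := by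
    rw [← real_inner_self_eq_norm_sq]
    simp only [v, sum_inner, real_inner_smul_left]
  have hquad : ‖v‖ ^ 2 = ∑ i, ∑ j, c i * c j * ⟪p i, p j⟫ := by
    rw [hnorm]
    refine Finset.sum_congr rfl fun i _ => ?_
    simp only [v, inner_sum, real_inner_smul_right, Finset.mul_sum]
    exact Finset.sum_congr rfl fun j _ => by ring
  have hcs : (∑ i, c i * ⟪p i, v⟫) ^ 2 ≤ (∑ i, c i ^ 2) * ∑ i, ⟪p i, v⟫ ^ 2 :=
    Finset.sum_mul_sq_le_sq_mul_sq _ _ _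
  have hX : 0 ≤ ∑ i, ⟪p i, v⟫ ^ 2 := by positivity
  rcases le_or_gt σ 0 with hσ | hσ
  · nlinarith [sq_nonneg ‖v‖]
  rcases (sq_nonneg ‖v‖).eq_or_lt with hv0 | hv0
  · rw [← hv0]; linarith
  rw [← hnorm] at hcs
  have := hgram c
  rw [← hquad] at this
  nlinarith [mul_le_mul_of_nonneg_right this hX]

variable {ι : Type*} [Fintype ι]

lemma EuclideanSpace.norm_equiv_symm_le {w : ι → ℝ} {b : ℝ} (h : ∀ i, |w i| ≤ b) :
    ‖(EuclideanSpace.equiv ι ℝ).symm w‖ ≤ √(Fintype.card ι) * b := by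
  rcases isEmpty_or_nonempty ι with hι | ⟨⟨i₀⟩⟩
  · simp [EuclideanSpace.norm_eq]
  have hb : 0 ≤ b := (abs_nonneg _).trans (h i₀)
  rw [EuclideanSpace.norm_eq, ← sqrt_sq hb, ← sqrt_mul (Nat.cast_nonneg _)]
  refine sqrt_le_sqrt ?_
  calc ∑ i, ‖(EuclideanSpace.equiv ι ℝ).symm w i‖ ^ 2 ≤ ∑ _i : ι, b ^ 2 :=
        Finset.sum_le_sum fun i _ => by
          simpa using pow_le_pow_left₀ (abs_nonneg _) (h i) 2
    _ = Fintype.card ι * b ^ 2 := by simp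

lemma EuclideanSpace.le_norm_equiv_symm {w : ι → ℝ} {b : ℝ} (h : b ^ 2 ≤ ∑ i, w i ^ 2) :
    b ≤ ‖(EuclideanSpace.equiv ι ℝ).symm w‖ := by
  rw [EuclideanSpace.norm_eq]
  exact le_sqrt_of_sq_le (by simpa using h)

lemma norm_equiv_symm_bounds_of_abs_sub_le {σ lo hi ε : ℝ} (hlo : 0 ≤ lo) {p : ι → E}
    (hp : ∀ i, ‖p i‖ = 1) {v : E} (hframe : σ * ‖v‖ ^ 2 ≤ ∑ i, ⟪p i, v⟫ ^ 2) {μ w : ι → ℝ}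
    (hμ : ∀ i, lo ≤ μ i ∧ μ i ≤ hi) (hw : ∀ i, |w i - μ i * ⟪p i, v⟫| ≤ ε) :
    lo * √σ * ‖v‖ - √(Fintype.card ι) * ε ≤ ‖(EuclideanSpace.equiv ι ℝ).symm w‖ ∧
      ‖(EuclideanSpace.equiv ι ℝ).symm w‖ ≤ √(Fintype.card ι) * (hi * ‖v‖ + ε) := by
  set m : ι → ℝ := fun i => μ i * ⟪p i, v⟫
  have hinner : ∀ i, |⟪p i, v⟫| ≤ ‖v‖ := fun i =>
    (abs_real_inner_le_norm _ _).trans (by rw [hp i, one_mul])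
  have herr : ‖(EuclideanSpace.equiv ι ℝ).symm w - (EuclideanSpace.equiv ι ℝ).symm m‖
      ≤ √(Fintype.card ι) * ε := by
    rw [← map_sub]; exact EuclideanSpace.norm_equiv_symm_le hw
  have hlow : lo * √σ * ‖v‖ ≤ ‖(EuclideanSpace.equiv ι ℝ).symm m‖ := by
    refine EuclideanSpace.le_norm_equiv_symm ?_
    rcases le_or_gt σ 0 with hσ | hσ
    · rw [sqrt_eq_zero'.2 hσ, mul_zero, zero_mul, sq, mul_zero]
      positivity
    calc (lo * √σ * ‖v‖) ^ 2 = lo ^ 2 * (σ * ‖v‖ ^ 2) := by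
          rw [mul_pow, mul_pow, sq_sqrt hσ.le]; ring
      _ ≤ lo ^ 2 * ∑ i, ⟪p i, v⟫ ^ 2 := mul_le_mul_of_nonneg_left hframe (sq_nonneg lo)
      _ ≤ ∑ i, m i ^ 2 := by
          rw [Finset.mul_sum]
          refine Finset.sum_le_sum fun i _ => ?_
          rw [show m i ^ 2 = μ i ^ 2 * ⟪p i, v⟫ ^ 2 by ring]
          gcongr
          exact (hμ i).1
  have hupp : ‖(EuclideanSpace.equiv ι ℝ).symm m‖ ≤ √(Fintype.card ι) * (hi * ‖v‖) := by
    refine EuclideanSpace.norm_equiv_symm_le fun i => ?_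
    rw [abs_mul, abs_of_nonneg (hlo.trans (hμ i).1)]
    exact mul_le_mul (hμ i).2 (hinner i) (abs_nonneg _) (hlo.trans ((hμ i).1.trans (hμ i).2))
  have hM := norm_le_norm_add_norm_sub ((EuclideanSpace.equiv ι ℝ).symm w)
    ((EuclideanSpace.equiv ι ℝ).symm m)
  have hW := norm_le_norm_add_norm_sub' ((EuclideanSpace.equiv ι ℝ).symm w)
    ((EuclideanSpace.equiv ι ℝ).symm m)
  exact ⟨by linarith, by linarith⟩

end InnerProductSpace

lemma pow_mul_heatKernel_inv_mul_sq (d : ℕ) {κ ρ : ℝ} (hκ : 0 < κ) (hρ : 0 < ρ)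
    (x y : EuclideanSpace ℝ (Fin d)) :
    ρ ^ d * heatKernel d (κ⁻¹ * ρ ^ 2) x y
      = (κ / (4 * π)) ^ ((d : ℝ) / 2) * exp (-(κ / (4 * ρ ^ 2)) * ‖x - y‖ ^ 2) := by
  have hbase : 4 * π * (κ⁻¹ * ρ ^ 2) = (κ / (4 * π) / ρ ^ 2)⁻¹ := by field_simp
  have hpow : (ρ ^ 2) ^ ((d : ℝ) / 2) = ρ ^ d := by
    rw [← rpow_natCast ρ 2, ← rpow_mul hρ.le, ← rpow_natCast ρ d]
    congr 1; push_cast; ring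
  rw [heatKernel, hbase, neg_div, rpow_neg (by positivity), inv_rpow (by positivity), inv_inv,
    div_rpow (by positivity) (by positivity), hpow]
  field_simp

lemma abs_pow_mul_heatKernel_sub_sub_le {d : ℕ} {S ρ : ℝ} (hS : 4 ≤ S) (hρ : 0 < ρ)
    {x₁ x₂ y z p : EuclideanSpace ℝ (Fin d)} (hyp : y - z = ‖y - z‖ • p)
    (hy : ‖y - z‖ ≤ 2 * S⁻¹ * ρ) (hx₁ : ‖x₁ - z‖ ≤ (S ^ 2)⁻¹ * ρ)
    (hx₂ : ‖x₂ - z‖ ≤ (S ^ 2)⁻¹ * ρ) :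
    |(ρ ^ d * heatKernel d ((S ^ 2)⁻¹ * ρ ^ 2) x₁ y - ρ ^ d * heatKernel d ((S ^ 2)⁻¹ * ρ ^ 2) x₂ y)
        - (S ^ 2 / (4 * π)) ^ ((d : ℝ) / 2) * (2 * (S ^ 2 / (4 * ρ ^ 2))
          * exp (-(S ^ 2 / (4 * ρ ^ 2)) * ‖y - z‖ ^ 2) * ‖y - z‖) * ⟪p, x₁ - x₂⟫|
      ≤ (S ^ 2 / (4 * π)) ^ ((d : ℝ) / 2) * (20 / ρ * ‖x₁ - x₂‖) := by
  have hinner : ⟪y - z, x₁ - x₂⟫ = ‖y - z‖ * ⟪p, x₁ - x₂⟫ := by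
    conv_lhs => rw [hyp]
    exact real_inner_smul_left _ _ _
  have h := abs_exp_sub_exp_sub_inner_le_of_scale hS hρ hy hx₁ hx₂
  rw [hinner] at h
  rw [pow_mul_heatKernel_inv_mul_sq d (by positivity) hρ,
    pow_mul_heatKernel_inv_mul_sq d (by positivity) hρ]
  set C₀ := (S ^ 2 / (4 * π)) ^ ((d : ℝ) / 2)
  calc _ = |C₀ * (exp (-(S ^ 2 / (4 * ρ ^ 2)) * ‖x₁ - y‖ ^ 2)
          - exp (-(S ^ 2 / (4 * ρ ^ 2)) * ‖x₂ - y‖ ^ 2)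
          - 2 * (S ^ 2 / (4 * ρ ^ 2)) * exp (-(S ^ 2 / (4 * ρ ^ 2)) * ‖y - z‖ ^ 2)
            * (‖y - z‖ * ⟪p, x₁ - x₂⟫))| := by congr 1; ring
    _ ≤ C₀ * (20 / ρ * ‖x₁ - x₂‖) := by
      rw [abs_mul, abs_of_pos (by positivity)]
      gcongr

lemma one_le_rpow_sq_div_four_pi (d : ℕ) {S : ℝ} (hS : 4 ≤ S) :
    1 ≤ (S ^ 2 / (4 * π)) ^ ((d : ℝ) / 2) :=
  one_le_rpow ((one_le_div (by positivity)).2 (by nlinarith [pi_le_four])) (by positivity)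

noncomputable def heatTriangulationMap (d : ℕ) (t ρ : ℝ) (y : Fin d → EuclideanSpace ℝ (Fin d))
    (x : EuclideanSpace ℝ (Fin d)) : EuclideanSpace ℝ (Fin d) :=
  (EuclideanSpace.equiv (Fin d) ℝ).symm fun i => ρ ^ d * heatKernel d t x (y i)

lemma heatTriangulationMap_sub_bounds {d : ℕ} {σ S ρ : ℝ} (hS : 4 ≤ S)
    (hσS : 6 * (20 * √d + 1) ≤ √σ * S) (hρ : 0 < ρ)
    {p y : Fin d → EuclideanSpace ℝ (Fin d)} {z x₁ x₂ : EuclideanSpace ℝ (Fin d)}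
    (hp : ∀ i, ‖p i‖ = 1) (hframe : σ * ‖x₁ - x₂‖ ^ 2 ≤ ∑ i, ⟪p i, x₁ - x₂⟫ ^ 2)
    (hy : ∀ i, y i - z = ‖y i - z‖ • p i)
    (hdist : ∀ i, S⁻¹ * ρ ≤ ‖y i - z‖ ∧ ‖y i - z‖ ≤ 2 * S⁻¹ * ρ)
    (hx₁ : ‖x₁ - z‖ ≤ (S ^ 2)⁻¹ * ρ) (hx₂ : ‖x₂ - z‖ ≤ (S ^ 2)⁻¹ * ρ) :
    ρ⁻¹ * ‖x₁ - x₂‖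
        ≤ ‖heatTriangulationMap d ((S ^ 2)⁻¹ * ρ ^ 2) ρ y x₁
          - heatTriangulationMap d ((S ^ 2)⁻¹ * ρ ^ 2) ρ y x₂‖ ∧
      ‖heatTriangulationMap d ((S ^ 2)⁻¹ * ρ ^ 2) ρ y x₁
          - heatTriangulationMap d ((S ^ 2)⁻¹ * ρ ^ 2) ρ y x₂‖
        ≤ √d * (S ^ 2 / (4 * π)) ^ ((d : ℝ) / 2) * (S + 20) * (ρ⁻¹ * ‖x₁ - x₂‖) := by
  have hS0 : 0 < S := by linarith
  have hslope := fun i =>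
    two_mul_mul_exp_neg_mul_sq_mul_mem_Icc hS0 hρ (hdist i).1 (hdist i).2
  obtain ⟨hlow, hupp⟩ := norm_equiv_symm_bounds_of_abs_sub_le (by positivity) hp hframe
    (fun i => ⟨mul_le_mul_of_nonneg_left (hslope i).1 (by positivity),
      mul_le_mul_of_nonneg_left (hslope i).2 (by positivity)⟩)
    (fun i => abs_pow_mul_heatKernel_sub_sub_le hS hρ (hy i) (hdist i).2 hx₁ hx₂)
  rw [heatTriangulationMap, heatTriangulationMap, ← map_sub]
  simp only [Fintype.card_fin] at hlow hupp
  refine ⟨le_trans ?_ hlow, hupp.trans_eq (by ring)⟩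
  calc ρ⁻¹ * ‖x₁ - x₂‖
      ≤ (S ^ 2 / (4 * π)) ^ ((d : ℝ) / 2) * (√σ * S / 6 - 20 * √d) * (ρ⁻¹ * ‖x₁ - x₂‖) := by
        refine le_mul_of_one_le_left (by positivity) (one_le_mul_of_one_le_of_one_le
          (one_le_rpow_sq_div_four_pi d hS) (by linarith))
    _ = _ := by ring

theorem heat_triangulation_euclidean_general (d : ℕ) (σmin σmax : ℝ)
    (hσmin : 0 < σmin) :
    ∃ c c' κ : ℝ, 0 < c ∧ 1 < c' ∧ 1 < κ ∧
      ∀ p : Fin d → EuclideanSpace ℝ (Fin d),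
        LinearIndependent ℝ p →
        (∀ i, ‖p i‖ = 1) →
        (∀ v : Fin d → ℝ,
          σmin * ∑ i, v i ^ 2 ≤ ∑ i, ∑ j, v i * v j * ⟪p i, p j⟫ ∧
            ∑ i, ∑ j, v i * v j * ⟪p i, p j⟫ ≤ σmax * ∑ i, v i ^ 2) →
        ∀ (z : EuclideanSpace ℝ (Fin d)) (ρ : ℝ), 0 < ρ →
          ∀ y : Fin d → EuclideanSpace ℝ (Fin d),
            (∀ i, ∃ s : ℝ, 0 < s ∧ y i - z = s • p i) →
            (∀ i, c * ρ ≤ ‖y i - z‖ ∧ ‖y i - z‖ ≤ 2 * c * ρ) →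
            ∀ x₁ ∈ Metric.ball z (κ⁻¹ * ρ), ∀ x₂ ∈ Metric.ball z (κ⁻¹ * ρ),
              (κ * c')⁻¹ * ρ⁻¹ * ‖x₁ - x₂‖ ≤
                  ‖((EuclideanSpace.equiv (Fin d) ℝ).symm
                      (fun i => ρ ^ d * heatKernel d (κ⁻¹ * ρ ^ 2) x₁ (y i)) -
                    (EuclideanSpace.equiv (Fin d) ℝ).symm
                      (fun i => ρ ^ d * heatKernel d (κ⁻¹ * ρ ^ 2) x₂ (y i)))‖ ∧
                ‖((EuclideanSpace.equiv (Fin d) ℝ).symm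
                      (fun i => ρ ^ d * heatKernel d (κ⁻¹ * ρ ^ 2) x₁ (y i)) -
                    (EuclideanSpace.equiv (Fin d) ℝ).symm
                      (fun i => ρ ^ d * heatKernel d (κ⁻¹ * ρ ^ 2) x₂ (y i)))‖ ≤
                  κ * c' * ρ⁻¹ * ‖x₁ - x₂‖ := by
  set S : ℝ := 6 * (20 * √d + 1) / √σmin + 4
  set C₀ : ℝ := (S ^ 2 / (4 * π)) ^ ((d : ℝ) / 2)
  have hσ : 0 < √σmin := sqrt_pos.2 hσmin
  have hS : 4 ≤ S := le_add_of_nonneg_left (by positivity)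
  have hσS : 6 * (20 * √d + 1) ≤ √σmin * S := by
    have : √σmin * S = 6 * (20 * √d + 1) + 4 * √σmin := by simp only [S]; field_simp
    linarith
  have hC₀ : 1 ≤ C₀ := one_le_rpow_sq_div_four_pi d hS
  set c' : ℝ := (√d + 1) * C₀ * (S + 20)
  have hc' : 24 ≤ c' := by
    nlinarith [one_le_mul_of_one_le_of_one_le (by linarith [sqrt_nonneg (d : ℝ)] : 1 ≤ √d + 1) hC₀]
  have hκ : 16 ≤ S ^ 2 := by nlinarith
  refine ⟨S⁻¹, c', S ^ 2, by positivity, by linarith, by linarith, ?_⟩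
  intro p hli hp hgram z ρ hρ y hdir hdist x₁ hx₁ x₂ hx₂
  have hframe : σmin * ‖x₁ - x₂‖ ^ 2 ≤ ∑ i, ⟪p i, x₁ - x₂⟫ ^ 2 :=
    mul_norm_sq_le_sum_inner_sq (fun c => (hgram c).1)
      (by rw [hli.span_eq_top_of_card_eq_finrank' (by simp)]; trivial)
  have hy : ∀ i, y i - z = ‖y i - z‖ • p i := fun i => by
    obtain ⟨s, hs, h⟩ := hdir i
    rw [h, norm_smul, hp i, mul_one, norm_of_nonneg hs.le]
  obtain ⟨hlow, hupp⟩ := heatTriangulationMap_sub_bounds hS hσS hρ hp hframe hy hdist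
    (mem_ball_iff_norm.1 hx₁).le (mem_ball_iff_norm.1 hx₂).le
  refine ⟨le_trans ?_ hlow, hupp.trans ?_⟩
  · rw [mul_assoc]
    exact mul_le_of_le_one_left (by positivity) (inv_le_one_of_one_le₀ (by nlinarith))
  · have hc'_ge : √d * C₀ * (S + 20) ≤ S ^ 2 * c' :=
      calc √d * C₀ * (S + 20) ≤ c' := by simp only [c']; gcongr; linarith
        _ ≤ S ^ 2 * c' := le_mul_of_one_le_left (by positivity) (by linarith)
    exact (mul_le_mul_of_nonneg_right hc'_ge (by positivity)).trans_eq (by ring)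

/-- Heat Triangulation Theorem in Euclidean space: for linearly independent unit directions
`p₁, …, p_d` whose Gram matrix has smallest (resp. largest) eigenvalue bounded below by
`σmin > 0` (resp. above by `σmax`), there are constants `c > 0`, `c', κ > 1`, depending only
on `d, σmin, σmax`, such that for every `z`, `ρ > 0`, and points `y_i` lying in the direction
`p_i` from `z` with `cρ ≤ ‖y_i - z‖ ≤ 2cρ`, the map
`Φ(x) = (ρ^d K_t(x,y₁), …, ρ^d K_t(x,y_d))` with `t = κ⁻¹ρ²` satisfies
`(κ c')⁻¹ ρ⁻¹ ‖x₁ - x₂‖ ≤ ‖Φ(x₁) - Φ(x₂)‖ ≤ κ c' ρ⁻¹ ‖x₁ - x₂‖` on `B(z, κ⁻¹ρ)`. -/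
theorem heat_triangulation_euclidean (d : ℕ) (hd : 1 ≤ d) (σmin σmax : ℝ)
    (hσmin : 0 < σmin) (hσ : σmin ≤ σmax) :
    ∃ c c' κ : ℝ, 0 < c ∧ 1 < c' ∧ 1 < κ ∧
      ∀ p : Fin d → EuclideanSpace ℝ (Fin d),
        LinearIndependent ℝ p →
        (∀ i, ‖p i‖ = 1) →
        (∀ v : Fin d → ℝ,
          σmin * ∑ i, v i ^ 2 ≤ ∑ i, ∑ j, v i * v j * ⟪p i, p j⟫ ∧
            ∑ i, ∑ j, v i * v j * ⟪p i, p j⟫ ≤ σmax * ∑ i, v i ^ 2) →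
        ∀ (z : EuclideanSpace ℝ (Fin d)) (ρ : ℝ), 0 < ρ →
          ∀ y : Fin d → EuclideanSpace ℝ (Fin d),
            (∀ i, ∃ s : ℝ, 0 < s ∧ y i - z = s • p i) →
            (∀ i, c * ρ ≤ ‖y i - z‖ ∧ ‖y i - z‖ ≤ 2 * c * ρ) →
            ∀ x₁ ∈ Metric.ball z (κ⁻¹ * ρ), ∀ x₂ ∈ Metric.ball z (κ⁻¹ * ρ),
              (κ * c')⁻¹ * ρ⁻¹ * ‖x₁ - x₂‖ ≤
                  ‖((EuclideanSpace.equiv (Fin d) ℝ).symm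
                      (fun i => ρ ^ d * heatKernel d (κ⁻¹ * ρ ^ 2) x₁ (y i)) -
                    (EuclideanSpace.equiv (Fin d) ℝ).symm
                      (fun i => ρ ^ d * heatKernel d (κ⁻¹ * ρ ^ 2) x₂ (y i)))‖ ∧
                ‖((EuclideanSpace.equiv (Fin d) ℝ).symm
                      (fun i => ρ ^ d * heatKernel d (κ⁻¹ * ρ ^ 2) x₁ (y i)) -
                    (EuclideanSpace.equiv (Fin d) ℝ).symm
                      (fun i => ρ ^ d * heatKernel d (κ⁻¹ * ρ ^ 2) x₂ (y i)))‖ ≤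
                  κ * c' * ρ⁻¹ * ‖x₁ - x₂‖ :=
  heat_triangulation_euclidean_general d σmin σmax hσmin
end

section
/- Let K_1(x,y) = (4π)^{-1} exp(-‖x−y‖²/4) be the Euclidean heat kernel on ℝ² at time t = 1, and let y_1 = (−1, 0) and y_2 = (0, −1). Define F : ℝ² → ℝ² by F(x) = (K_1(x, y_1), K_1(x, y_2)). Then there exist constants 0 < c ≤ C such that for all x_1, x_2 in the closed ball of radius 1/2 centered at the origin, c‖x_1 − x_2‖ ≤ ‖F(x_1) − F(x_2)‖ ≤ C‖x_1 − x_2‖; in particular F is injective on that ball. -/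
open scoped Real

lemma exp_diff_lb {s t : ℝ} (hs : s ≤ 9/4) (ht : t ≤ 9/4) :
    Real.exp (-(9/16)) / 4 * |s - t| ≤ |Real.exp (-s/4) - Real.exp (-t/4)| := by
  rcases le_total s t with h | h
  · have h1 : Real.exp (-t/4) ≤ Real.exp (-s/4) := Real.exp_le_exp.2 (by linarith)
    have e1 : |s - t| = t - s := by rw [abs_of_nonpos (by linarith)]; ring
    have e2 : |Real.exp (-s/4) - Real.exp (-t/4)| = Real.exp (-s/4) - Real.exp (-t/4) :=
      abs_of_nonneg (by linarith)
    rw [e1, e2]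
    have key : Real.exp (-s/4) - Real.exp (-t/4) ≥ Real.exp (-t/4) * ((t-s)/4) := by
      have := Real.add_one_le_exp ((t-s)/4)
      have h2 : Real.exp (-s/4) = Real.exp (-t/4) * Real.exp ((t-s)/4) := by
        rw [← Real.exp_add]; ring_nf
      nlinarith [Real.exp_pos (-t/4)]
    have h3 : Real.exp (-(9/16)) ≤ Real.exp (-t/4) := Real.exp_le_exp.2 (by linarith)
    nlinarith [Real.exp_pos (-t/4)]
  · have h1 : Real.exp (-s/4) ≤ Real.exp (-t/4) := Real.exp_le_exp.2 (by linarith)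
    have e1 : |s - t| = s - t := abs_of_nonneg (by linarith)
    have e2 : |Real.exp (-s/4) - Real.exp (-t/4)| = Real.exp (-t/4) - Real.exp (-s/4) := by
      rw [abs_of_nonpos (by linarith)]; ring
    rw [e1, e2]
    have key : Real.exp (-t/4) - Real.exp (-s/4) ≥ Real.exp (-s/4) * ((s-t)/4) := by
      have := Real.add_one_le_exp ((s-t)/4)
      have h2 : Real.exp (-t/4) = Real.exp (-s/4) * Real.exp ((s-t)/4) := by
        rw [← Real.exp_add]; ring_nf
      nlinarith [Real.exp_pos (-s/4)]
    have h3 : Real.exp (-(9/16)) ≤ Real.exp (-s/4) := Real.exp_le_exp.2 (by linarith)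
    nlinarith [Real.exp_pos (-s/4)]

lemma exp_diff_ub {s t : ℝ} (hs : 0 ≤ s) (ht : 0 ≤ t) :
    |Real.exp (-s/4) - Real.exp (-t/4)| ≤ |s - t| / 4 := by
  rcases le_total s t with h | h
  · have h1 : Real.exp (-t/4) ≤ Real.exp (-s/4) := Real.exp_le_exp.2 (by linarith)
    have e1 : |s - t| = t - s := by rw [abs_of_nonpos (by linarith)]; ring
    have e2 : |Real.exp (-s/4) - Real.exp (-t/4)| = Real.exp (-s/4) - Real.exp (-t/4) :=
      abs_of_nonneg (by linarith)
    rw [e1, e2]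
    have h2 : Real.exp (-s/4) ≤ 1 := Real.exp_le_one_iff.2 (by linarith)
    have h3 : Real.exp (-t/4) = Real.exp (-s/4) * Real.exp (-((t-s)/4)) := by
      rw [← Real.exp_add]; ring_nf
    have h4 := Real.add_one_le_exp (-((t-s)/4))
    nlinarith [Real.exp_pos (-s/4)]
  · have h1 : Real.exp (-s/4) ≤ Real.exp (-t/4) := Real.exp_le_exp.2 (by linarith)
    have e1 : |s - t| = s - t := abs_of_nonneg (by linarith)
    have e2 : |Real.exp (-s/4) - Real.exp (-t/4)| = Real.exp (-t/4) - Real.exp (-s/4) := by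
      rw [abs_of_nonpos (by linarith)]; ring
    rw [e1, e2]
    have h2 : Real.exp (-t/4) ≤ 1 := Real.exp_le_one_iff.2 (by linarith)
    have h3 : Real.exp (-s/4) = Real.exp (-t/4) * Real.exp (-((s-t)/4)) := by
      rw [← Real.exp_add]; ring_nf
    have h4 := Real.add_one_le_exp (-((s-t)/4))
    nlinarith [Real.exp_pos (-t/4)]


lemma sqrt_two_sub_one_pos : (0:ℝ) < Real.sqrt 2 - 1 := by
  nlinarith [Real.sq_sqrt (by norm_num : (2:ℝ) ≥ 0), Real.sqrt_nonneg 2]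

lemma sqrt_two_le_two : Real.sqrt 2 ≤ 2 := by
  nlinarith [Real.sq_sqrt (by norm_num : (2:ℝ) ≥ 0), Real.sqrt_nonneg 2]

/-- abstract combination: `|D+2p| + |D+2q| ≥ (√2-1) r`. -/
lemma combineS (p q D r : ℝ) (hr0 : 0 ≤ r) (hr2 : r^2 = p^2+q^2) (hDr : |D| ≤ r) :
    (Real.sqrt 2 - 1) * r ≤ |D+2*p| + |D+2*q| := by
  have hpm : Real.sqrt 2 * r ≤ |p-q| + |p+q| := by
    have h1' : Real.sqrt 2 * r = Real.sqrt (2*(p^2+q^2)) := by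
      rw [← hr2, Real.sqrt_mul (by norm_num), Real.sqrt_sq hr0]
    have h2' : 2*(p^2+q^2) ≤ (|p-q| + |p+q|)^2 := by
      nlinarith [sq_abs (p-q), sq_abs (p+q),
        mul_nonneg (abs_nonneg (p-q)) (abs_nonneg (p+q))]
    rw [h1']
    calc Real.sqrt (2*(p^2+q^2)) ≤ Real.sqrt ((|p-q| + |p+q|)^2) := Real.sqrt_le_sqrt h2'
      _ = |p-q| + |p+q| := Real.sqrt_sq (by positivity)
  have h1' : 2*|p-q| ≤ |D+2*p| + |D+2*q| := by
    have he : |(D+2*p) - (D+2*q)| = 2*|p-q| := by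
      rw [show (D+2*p) - (D+2*q) = 2*(p-q) by ring, abs_mul]; simp
    calc 2*|p-q| = |(D+2*p) - (D+2*q)| := he.symm
      _ ≤ |D+2*p| + |D+2*q| := abs_sub _ _
  have h2' : 2*|p+q| - 2*|D| ≤ |D+2*p| + |D+2*q| := by
    have h3' : |2*(p+q)| - |2*D| ≤ |2*(p+q) + 2*D| := by
      have := abs_sub_abs_le_abs_sub (2*(p+q)) (-(2*D))
      rw [abs_neg, sub_neg_eq_add] at this
      linarith
    have h4' : |2*(p+q) + 2*D| = |(D+2*p) + (D+2*q)| := by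
      rw [show 2*(p+q) + 2*D = (D+2*p) + (D+2*q) by ring]
    have h5' := abs_add_le (D+2*p) (D+2*q)
    rw [abs_mul, abs_mul, abs_two] at h3'
    rw [h4'] at h3'
    linarith
  linarith

/-- abstract norm comparison -/
lemma normcmp (p q D r X Y E : ℝ) (hE : 0 < E) (hr0 : 0 ≤ r) (hr2 : r^2 = p^2+q^2)
    (hDr : |D| ≤ r)
    (hX1 : E/4 * |D+2*p| ≤ |X|) (hX2 : |X| ≤ |D+2*p|/4)
    (hY1 : E/4 * |D+2*q| ≤ |Y|) (hY2 : |Y| ≤ |D+2*q|/4) :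
    E * (Real.sqrt 2 - 1) / 8 * r ≤ Real.sqrt (X^2+Y^2)
    ∧ Real.sqrt (X^2+Y^2) ≤ 3/2 * r := by
  have hpr : |p| ≤ r := by
    have h : p^2 ≤ r^2 := by rw [hr2]; nlinarith [sq_nonneg q]
    have := Real.sqrt_le_sqrt h
    rwa [Real.sqrt_sq_eq_abs, Real.sqrt_sq hr0] at this
  have hqr : |q| ≤ r := by
    have h : q^2 ≤ r^2 := by rw [hr2]; nlinarith [sq_nonneg p]
    have := Real.sqrt_le_sqrt h
    rwa [Real.sqrt_sq_eq_abs, Real.sqrt_sq hr0] at this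
  have hS := combineS p q D r hr0 hr2 hDr
  have hNl : (|X| + |Y|)/2 ≤ Real.sqrt (X^2+Y^2) := by
    have h1' : |X| ≤ Real.sqrt (X^2+Y^2) := by
      rw [← Real.sqrt_sq_eq_abs]; exact Real.sqrt_le_sqrt (by nlinarith [sq_nonneg Y])
    have h2' : |Y| ≤ Real.sqrt (X^2+Y^2) := by
      rw [← Real.sqrt_sq_eq_abs]; exact Real.sqrt_le_sqrt (by nlinarith [sq_nonneg X])
    linarith
  have hNu : Real.sqrt (X^2+Y^2) ≤ |X| + |Y| := by
    calc Real.sqrt (X^2+Y^2) ≤ Real.sqrt ((|X|+|Y|)^2) := by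
          apply Real.sqrt_le_sqrt
          nlinarith [sq_abs X, sq_abs Y, mul_nonneg (abs_nonneg X) (abs_nonneg Y)]
      _ = |X| + |Y| := Real.sqrt_sq (by positivity)
  constructor
  · have step : E * (Real.sqrt 2 - 1) / 8 * r ≤ (|X| + |Y|)/2 := by
      nlinarith [hS, hX1, hY1]
    linarith
  · have hXu : |X| ≤ 3/4 * r := by
      have h : |D+2*p| ≤ 3 * r := by
        calc |D+2*p| ≤ |D| + |2*p| := abs_add_le _ _
          _ = |D| + 2*|p| := by rw [abs_mul, abs_two]
          _ ≤ 3 * r := by linarith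
      linarith
    have hYu : |Y| ≤ 3/4 * r := by
      have h : |D+2*q| ≤ 3 * r := by
        calc |D+2*q| ≤ |D| + |2*q| := abs_add_le _ _
          _ = |D| + 2*|q| := by rw [abs_mul, abs_two]
          _ ≤ 3 * r := by linarith
      linarith
    linarith

lemma core (a b a' b' : ℝ) (h1 : a^2+b^2 ≤ 1/4) (h2 : a'^2+b'^2 ≤ 1/4) :
    Real.exp (-(9/16)) * (Real.sqrt 2 - 1) / 8 * Real.sqrt ((a-a')^2+(b-b')^2)
      ≤ Real.sqrt ((Real.exp (-((a+1)^2+b^2)/4) - Real.exp (-((a'+1)^2+b'^2)/4))^2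
          + (Real.exp (-(a^2+(b+1)^2)/4) - Real.exp (-(a'^2+(b'+1)^2)/4))^2)
    ∧ Real.sqrt ((Real.exp (-((a+1)^2+b^2)/4) - Real.exp (-((a'+1)^2+b'^2)/4))^2
          + (Real.exp (-(a^2+(b+1)^2)/4) - Real.exp (-(a'^2+(b'+1)^2)/4))^2)
      ≤ 3/2 * Real.sqrt ((a-a')^2+(b-b')^2) := by
  have hr0 : (0:ℝ) ≤ Real.sqrt ((a-a')^2+(b-b')^2) := Real.sqrt_nonneg _
  have hr2 : (Real.sqrt ((a-a')^2+(b-b')^2))^2 = (a-a')^2+(b-b')^2 :=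
    Real.sq_sqrt (by positivity)
  have hE : (0:ℝ) < Real.exp (-(9/16)) := Real.exp_pos _
  -- ranges
  have hub : (a+1)^2+b^2 ≤ 9/4 := by nlinarith [sq_nonneg (2*a-1)]
  have hub' : (a'+1)^2+b'^2 ≤ 9/4 := by nlinarith [sq_nonneg (2*a'-1)]
  have hvb : a^2+(b+1)^2 ≤ 9/4 := by nlinarith [sq_nonneg (2*b-1)]
  have hvb' : a'^2+(b'+1)^2 ≤ 9/4 := by nlinarith [sq_nonneg (2*b'-1)]
  -- |D| ≤ r
  have hDr : |a^2+b^2-a'^2-b'^2| ≤ Real.sqrt ((a-a')^2+(b-b')^2) := by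
    have hsq : (a^2+b^2-a'^2-b'^2)^2 ≤ (a-a')^2+(b-b')^2 := by
      nlinarith [sq_nonneg ((a+a')*(b-b') - (b+b')*(a-a')), sq_nonneg (a-a'), sq_nonneg (b-b'),
        sq_nonneg (a+a'), sq_nonneg (b+b')]
    calc |a^2+b^2-a'^2-b'^2| = Real.sqrt ((a^2+b^2-a'^2-b'^2)^2) :=
          (Real.sqrt_sq_eq_abs _).symm
      _ ≤ Real.sqrt ((a-a')^2+(b-b')^2) := Real.sqrt_le_sqrt hsq
  -- diff rewrites
  have edu : ((a+1)^2+b^2) - ((a'+1)^2+b'^2) = (a^2+b^2-a'^2-b'^2) + 2*(a-a') := by ring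
  have edv : (a^2+(b+1)^2) - (a'^2+(b'+1)^2) = (a^2+b^2-a'^2-b'^2) + 2*(b-b') := by ring
  have hX1 := exp_diff_lb hub hub'
  have hX2 := exp_diff_ub (s := (a+1)^2+b^2) (t := (a'+1)^2+b'^2) (by positivity) (by positivity)
  have hY1 := exp_diff_lb hvb hvb'
  have hY2 := exp_diff_ub (s := a^2+(b+1)^2) (t := a'^2+(b'+1)^2) (by positivity) (by positivity)
  rw [edu] at hX1 hX2
  rw [edv] at hY1 hY2
  exact normcmp (a-a') (b-b') (a^2+b^2-a'^2-b'^2) _ _ _ _ hE hr0 hr2 hDr hX1 hX2 hY1 hY2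

lemma nsq (z : EuclideanSpace ℝ (Fin 2)) : ‖z‖^2 = (z 0)^2 + (z 1)^2 := by
  rw [EuclideanSpace.norm_eq, Fin.sum_univ_two, Real.norm_eq_abs, Real.norm_eq_abs,
    sq_abs, sq_abs, Real.sq_sqrt (by positivity)]

lemma nrm (z : EuclideanSpace ℝ (Fin 2)) : ‖z‖ = Real.sqrt ((z 0)^2 + (z 1)^2) := by
  rw [EuclideanSpace.norm_eq, Fin.sum_univ_two, Real.norm_eq_abs, Real.norm_eq_abs,
    sq_abs, sq_abs]

/-- Heat triangulation in the plane: with `y₁ = (-1,0)`, `y₂ = (0,-1)` and `t = 1`, the map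
`F(x) = (K₁(x,y₁), K₁(x,y₂))` is bi-Lipschitz on the closed ball of radius `1/2` centered
at the origin; in particular it is injective there. -/
theorem heat_triangulation_plane_example :
    let y₁ : EuclideanSpace ℝ (Fin 2) := (EuclideanSpace.equiv (Fin 2) ℝ).symm ![-1, 0]
    let y₂ : EuclideanSpace ℝ (Fin 2) := (EuclideanSpace.equiv (Fin 2) ℝ).symm ![0, -1]
    let F : EuclideanSpace ℝ (Fin 2) → EuclideanSpace ℝ (Fin 2) :=
      fun x => (EuclideanSpace.equiv (Fin 2) ℝ).symm ![heatKernel 2 1 x y₁, heatKernel 2 1 x y₂]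
    ∃ c C : ℝ, 0 < c ∧ c ≤ C ∧
      (∀ x₁ ∈ Metric.closedBall (0 : EuclideanSpace ℝ (Fin 2)) (1 / 2),
        ∀ x₂ ∈ Metric.closedBall (0 : EuclideanSpace ℝ (Fin 2)) (1 / 2),
          c * ‖x₁ - x₂‖ ≤ ‖F x₁ - F x₂‖ ∧ ‖F x₁ - F x₂‖ ≤ C * ‖x₁ - x₂‖) ∧
      Set.InjOn F (Metric.closedBall (0 : EuclideanSpace ℝ (Fin 2)) (1 / 2)) := by
  intro y₁ y₂ F
  have hπ : (0:ℝ) < (4*Real.pi)⁻¹ := by positivity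
  have hk : ∀ x y : EuclideanSpace ℝ (Fin 2),
      heatKernel 2 1 x y = (4*Real.pi)⁻¹ * Real.exp (-‖x-y‖^2/4) := by
    intro x y
    unfold heatKernel
    norm_num
    rw [Real.rpow_neg_one, mul_inv]
    ring
  have hcomp1 : ∀ z : EuclideanSpace ℝ (Fin 2), ‖z - y₁‖^2 = (z 0 + 1)^2 + (z 1)^2 := by
    intro z
    rw [nsq]
    have h0 : (z - y₁) 0 = z 0 + 1 := by show z 0 - (-1) = z 0 + 1; ring
    have h1 : (z - y₁) 1 = z 1 := by show z 1 - 0 = z 1; ring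
    rw [h0, h1]
  have hcomp2 : ∀ z : EuclideanSpace ℝ (Fin 2), ‖z - y₂‖^2 = (z 0)^2 + (z 1 + 1)^2 := by
    intro z
    rw [nsq]
    have h0 : (z - y₂) 0 = z 0 := by show z 0 - 0 = z 0; ring
    have h1 : (z - y₂) 1 = z 1 + 1 := by show z 1 - (-1) = z 1 + 1; ring
    rw [h0, h1]
  set κ := (4*Real.pi)⁻¹ with hκdef
  have hcpos : 0 < κ * (Real.exp (-(9/16)) * (Real.sqrt 2 - 1) / 8) := by
    have := sqrt_two_sub_one_pos
    have := Real.exp_pos (-(9/16:ℝ))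
    positivity
  have key : ∀ x₁ ∈ Metric.closedBall (0 : EuclideanSpace ℝ (Fin 2)) (1 / 2),
      ∀ x₂ ∈ Metric.closedBall (0 : EuclideanSpace ℝ (Fin 2)) (1 / 2),
        κ * (Real.exp (-(9/16)) * (Real.sqrt 2 - 1) / 8) * ‖x₁ - x₂‖ ≤ ‖F x₁ - F x₂‖ ∧
        ‖F x₁ - F x₂‖ ≤ κ * (3/2) * ‖x₁ - x₂‖ := by
    intro x₁ hx₁ x₂ hx₂
    rw [Metric.mem_closedBall, dist_zero_right] at hx₁ hx₂
    have hb1 : (x₁ 0)^2 + (x₁ 1)^2 ≤ 1/4 := by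
      have := nsq x₁
      nlinarith [norm_nonneg x₁]
    have hb2 : (x₂ 0)^2 + (x₂ 1)^2 ≤ 1/4 := by
      have := nsq x₂
      nlinarith [norm_nonneg x₂]
    have hF0 : (F x₁ - F x₂) 0 = heatKernel 2 1 x₁ y₁ - heatKernel 2 1 x₂ y₁ := rfl
    have hF1 : (F x₁ - F x₂) 1 = heatKernel 2 1 x₁ y₂ - heatKernel 2 1 x₂ y₂ := rfl
    have hXe : heatKernel 2 1 x₁ y₁ - heatKernel 2 1 x₂ y₁
        = κ * (Real.exp (-((x₁ 0 + 1)^2 + (x₁ 1)^2)/4) - Real.exp (-((x₂ 0 + 1)^2 + (x₂ 1)^2)/4)) := by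
      rw [hk, hk, hcomp1, hcomp1]; ring
    have hYe : heatKernel 2 1 x₁ y₂ - heatKernel 2 1 x₂ y₂
        = κ * (Real.exp (-((x₁ 0)^2 + (x₁ 1 + 1)^2)/4) - Real.exp (-((x₂ 0)^2 + (x₂ 1 + 1)^2)/4)) := by
      rw [hk, hk, hcomp2, hcomp2]; ring
    have hnormF : ‖F x₁ - F x₂‖
        = κ * Real.sqrt ((Real.exp (-((x₁ 0 + 1)^2 + (x₁ 1)^2)/4) - Real.exp (-((x₂ 0 + 1)^2 + (x₂ 1)^2)/4))^2
            + (Real.exp (-((x₁ 0)^2 + (x₁ 1 + 1)^2)/4) - Real.exp (-((x₂ 0)^2 + (x₂ 1 + 1)^2)/4))^2) := by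
      rw [nrm, hF0, hF1, hXe, hYe]
      rw [show (κ * (Real.exp (-((x₁ 0 + 1)^2 + (x₁ 1)^2)/4) - Real.exp (-((x₂ 0 + 1)^2 + (x₂ 1)^2)/4)))^2
            + (κ * (Real.exp (-((x₁ 0)^2 + (x₁ 1 + 1)^2)/4) - Real.exp (-((x₂ 0)^2 + (x₂ 1 + 1)^2)/4)))^2
          = κ^2 * ((Real.exp (-((x₁ 0 + 1)^2 + (x₁ 1)^2)/4) - Real.exp (-((x₂ 0 + 1)^2 + (x₂ 1)^2)/4))^2
            + (Real.exp (-((x₁ 0)^2 + (x₁ 1 + 1)^2)/4) - Real.exp (-((x₂ 0)^2 + (x₂ 1 + 1)^2)/4))^2) by ring]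
      rw [Real.sqrt_mul (sq_nonneg κ), Real.sqrt_sq hπ.le]
    have hnormx : ‖x₁ - x₂‖ = Real.sqrt ((x₁ 0 - x₂ 0)^2 + (x₁ 1 - x₂ 1)^2) := by
      rw [nrm]; rfl
    obtain ⟨hl, hu⟩ := core (x₁ 0) (x₁ 1) (x₂ 0) (x₂ 1) hb1 hb2
    constructor
    · rw [hnormF, hnormx]
      calc κ * (Real.exp (-(9/16)) * (Real.sqrt 2 - 1) / 8) * Real.sqrt ((x₁ 0 - x₂ 0)^2 + (x₁ 1 - x₂ 1)^2)
          = κ * (Real.exp (-(9/16)) * (Real.sqrt 2 - 1) / 8 * Real.sqrt ((x₁ 0 - x₂ 0)^2 + (x₁ 1 - x₂ 1)^2)) := by ring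
        _ ≤ κ * _ := by exact mul_le_mul_of_nonneg_left hl hπ.le
    · rw [hnormF, hnormx]
      calc κ * Real.sqrt _ ≤ κ * (3/2 * Real.sqrt ((x₁ 0 - x₂ 0)^2 + (x₁ 1 - x₂ 1)^2)) :=
            mul_le_mul_of_nonneg_left hu hπ.le
        _ = κ * (3/2) * Real.sqrt ((x₁ 0 - x₂ 0)^2 + (x₁ 1 - x₂ 1)^2) := by ring
  refine ⟨κ * (Real.exp (-(9/16)) * (Real.sqrt 2 - 1) / 8), κ * (3/2), hcpos, ?_, key, ?_⟩
  · have h1 : Real.exp (-(9/16:ℝ)) ≤ 1 := Real.exp_le_one_iff.2 (by norm_num)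
    have h2 := sqrt_two_le_two
    have h3 := sqrt_two_sub_one_pos
    have : Real.exp (-(9/16:ℝ)) * (Real.sqrt 2 - 1) / 8 ≤ 3/2 := by nlinarith
    nlinarith
  · intro x hx x' hx' hFeq
    have h := (key x hx x' hx').1
    rw [hFeq, sub_self, norm_zero] at h
    have h0 : ‖x - x'‖ ≤ 0 := by
      nlinarith [norm_nonneg (x - x')]
    have h1 : ‖x - x'‖ = 0 := le_antisymm h0 (norm_nonneg _)
    exact sub_eq_zero.1 (norm_eq_zero.1 h1)
end

section
/- Let X be a set, λ : ℕ → [0, ∞), φ : ℕ → X → ℝ, and z, w ∈ X, t > 0, d ≥ 1, A > 0, C_1 > 0, C_2 > 0. For x, y ∈ X define K_s(x, y) = ∑_j φ_j(x) φ_j(y) e^{−λ_j s} whenever this series converges absolutely, and assume all the series below converge absolutely. Suppose: K_{t/2}(z, z) ≤ C_2 (t/2)^{−d/2}, K_{t/2}(w, w) ≤ C_2 (t/2)^{−d/2}, K_t(z, w) ≥ C_1 t^{−d/2}, and e^{−A/2} 2^{d/2} C_2 ≤ C_1 / 2. Then the truncated sum over low frequencies satisfies (1/2) K_t(z, w) ≤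 ∑_{j : λ_j ≤ A/t} φ_j(z) φ_j(w) e^{−λ_j t} ≤ (3/2) K_t(z, w). -/
/-!
Split `K_t(z,w)` at the frequency `A/t`. For a high-frequency term,
`e^{-λt} ≤ e^{-A/2} e^{-λt/2}` and `|ab| ≤ (a² + b²)/2`, so the high-frequency part is at most
`e^{-A/2}` times the mean of `K_{t/2}(z,z)` and `K_{t/2}(w,w)`, hence at most
`e^{-A/2} 2^{d/2} C₂ t^{-d/2} ≤ (C₁/2) t^{-d/2} ≤ K_t(z,w)/2`. The truncated sum therefore
differs from `K_t(z,w)` by at most half of it.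
-/

open Real

theorem tsum_eq_tsum_ite_add_tsum_ite {ι α : Type*} [UniformSpace α] [AddCommGroup α]
    [IsUniformAddGroup α] [CompleteSpace α] [T2Space α] {f : ι → α} (hf : Summable f)
    (p : ι → Prop) [DecidablePred p] :
    ∑' j, f j = (∑' j, if p j then f j else 0) + ∑' j, if p j then 0 else f j := by
  have h := (hf.indicator {j | p j}).tsum_add (hf.indicator {j | p j}ᶜ)
  rw [tsum_congr (Set.indicator_self_add_compl_apply _ f)] at h
  simpa only [Set.indicator_apply, Set.mem_compl_iff, Set.mem_ofPred_eq, ite_not] using h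

theorem abs_mul_mul_exp_le_of_lt {a b lam t A : ℝ} (h : A < lam * t) :
    |a * b * exp (-lam * t)| ≤
      exp (-A / 2) * ((a ^ 2 * exp (-lam * (t / 2)) + b ^ 2 * exp (-lam * (t / 2))) / 2) := by
  have hexp : exp (-lam * (t / 2)) ≤ exp (-A / 2) := exp_le_exp.mpr (by linarith)
  have hamgm : |a * b| ≤ (a ^ 2 + b ^ 2) / 2 := by
    rw [abs_mul, ← sq_abs a, ← sq_abs b]
    linarith [two_mul_le_add_sq |a| |b|]
  calc |a * b * exp (-lam * t)| = |a * b| * (exp (-lam * (t / 2)) * exp (-lam * (t / 2))) := by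
        rw [abs_mul, abs_of_pos (exp_pos _), ← exp_add]; ring_nf
    _ ≤ (a ^ 2 + b ^ 2) / 2 * (exp (-A / 2) * exp (-lam * (t / 2))) := by gcongr
    _ = _ := by ring

theorem abs_highFreq_tsum_le {ι : Type*} (lam a b : ι → ℝ) {t A : ℝ} (ht : 0 < t)
    (ha : Summable fun j => a j ^ 2 * exp (-lam j * (t / 2)))
    (hb : Summable fun j => b j ^ 2 * exp (-lam j * (t / 2))) :
    |∑' j, if lam j ≤ A / t then 0 else a j * b j * exp (-lam j * t)| ≤
      exp (-A / 2) * (((∑' j, a j ^ 2 * exp (-lam j * (t / 2))) +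
        ∑' j, b j ^ 2 * exp (-lam j * (t / 2))) / 2) := by
  rw [← ha.tsum_add hb, ← tsum_div_const, ← tsum_mul_left]
  refine tsum_of_norm_bounded
    (f := fun j => if lam j ≤ A / t then 0 else a j * b j * exp (-lam j * t))
    (((ha.add hb).div_const 2).mul_left _).hasSum fun j => ?_
  split_ifs with hj
  · rw [norm_zero]; positivity
  · exact abs_mul_mul_exp_le_of_lt ((div_lt_iff₀ ht).mp (not_le.mp hj))

theorem div_two_rpow_neg {t : ℝ} (ht : 0 ≤ t) (s : ℝ) :
    (t / 2) ^ (-s) = 2 ^ s * t ^ (-s) := by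
  rw [div_eq_mul_inv, mul_rpow ht (by norm_num), inv_rpow (by norm_num), ← rpow_neg (by norm_num),
    neg_neg, mul_comm]

theorem truncated_heat_kernel_comparable_general {X : Type*} (lam : ℕ → ℝ)
    (φ : ℕ → X → ℝ) (z w : X) (t : ℝ) (ht : 0 < t) (d : ℕ)
    (A C₁ C₂ : ℝ)
    (habs : Summable fun j => |φ j z * φ j w * Real.exp (-lam j * t)|)
    (hz : Summable fun j => φ j z ^ 2 * Real.exp (-lam j * (t / 2)))
    (hw : Summable fun j => φ j w ^ 2 * Real.exp (-lam j * (t / 2)))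
    (hKz : (∑' j, φ j z ^ 2 * Real.exp (-lam j * (t / 2))) ≤ C₂ * (t / 2) ^ (-(d : ℝ) / 2))
    (hKw : (∑' j, φ j w ^ 2 * Real.exp (-lam j * (t / 2))) ≤ C₂ * (t / 2) ^ (-(d : ℝ) / 2))
    (hKzw : C₁ * t ^ (-(d : ℝ) / 2) ≤ ∑' j, φ j z * φ j w * Real.exp (-lam j * t))
    (hAC : Real.exp (-A / 2) * 2 ^ ((d : ℝ) / 2) * C₂ ≤ C₁ / 2) :
    (1 / 2) * (∑' j, φ j z * φ j w * Real.exp (-lam j * t)) ≤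
        (∑' j, if lam j ≤ A / t then φ j z * φ j w * Real.exp (-lam j * t) else 0) ∧
      (∑' j, if lam j ≤ A / t then φ j z * φ j w * Real.exp (-lam j * t) else 0) ≤
        (3 / 2) * (∑' j, φ j z * φ j w * Real.exp (-lam j * t)) := by
  have hsplit := tsum_eq_tsum_ite_add_tsum_ite habs.of_abs (fun j => lam j ≤ A / t)
  have htail : |∑' j, if lam j ≤ A / t then 0 else φ j z * φ j w * exp (-lam j * t)| ≤
      (∑' j, φ j z * φ j w * exp (-lam j * t)) / 2 :=
    calc _ ≤ exp (-A / 2) * (((∑' j, φ j z ^ 2 * exp (-lam j * (t / 2))) +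
            ∑' j, φ j w ^ 2 * exp (-lam j * (t / 2))) / 2) :=
          abs_highFreq_tsum_le lam (φ · z) (φ · w) ht hz hw
      _ ≤ exp (-A / 2) * (C₂ * (t / 2) ^ (-(d : ℝ) / 2)) := by gcongr; linarith
      _ = exp (-A / 2) * 2 ^ ((d : ℝ) / 2) * C₂ * t ^ (-(d : ℝ) / 2) := by
          rw [neg_div 2 (d : ℝ), div_two_rpow_neg ht.le]; ring
      _ ≤ C₁ / 2 * t ^ (-(d : ℝ) / 2) := by gcongr
      _ ≤ _ := by linarith
  obtain ⟨htail_lo, htail_hi⟩ := abs_le.mp htail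
  constructor <;> linarith

/-- Truncation lemma, part (i): under explicit diagonal heat-kernel bounds at time `t/2`,
a lower bound on `K_t(z,w)` and the smallness condition `e^{-A/2} 2^{d/2} C₂ ≤ C₁/2`,
the spectral expansion truncated to eigenvalues `λ_j ≤ A/t` is within a factor
`[1/2, 3/2]` of the full heat kernel `K_t(z,w)`. -/
theorem truncated_heat_kernel_comparable {X : Type*} (lam : ℕ → ℝ) (hlam : ∀ j, 0 ≤ lam j)
    (φ : ℕ → X → ℝ) (z w : X) (t : ℝ) (ht : 0 < t) (d : ℕ) (hd : 1 ≤ d)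
    (A C₁ C₂ : ℝ) (hA : 0 < A) (hC₁ : 0 < C₁) (hC₂ : 0 < C₂)
    (habs : Summable fun j => |φ j z * φ j w * Real.exp (-lam j * t)|)
    (hz : Summable fun j => φ j z ^ 2 * Real.exp (-lam j * (t / 2)))
    (hw : Summable fun j => φ j w ^ 2 * Real.exp (-lam j * (t / 2)))
    (hKz : (∑' j, φ j z ^ 2 * Real.exp (-lam j * (t / 2))) ≤ C₂ * (t / 2) ^ (-(d : ℝ) / 2))
    (hKw : (∑' j, φ j w ^ 2 * Real.exp (-lam j * (t / 2))) ≤ C₂ * (t / 2) ^ (-(d : ℝ) / 2))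
    (hKzw : C₁ * t ^ (-(d : ℝ) / 2) ≤ ∑' j, φ j z * φ j w * Real.exp (-lam j * t))
    (hAC : Real.exp (-A / 2) * 2 ^ ((d : ℝ) / 2) * C₂ ≤ C₁ / 2) :
    (1 / 2) * (∑' j, φ j z * φ j w * Real.exp (-lam j * t)) ≤
        (∑' j, if lam j ≤ A / t then φ j z * φ j w * Real.exp (-lam j * t) else 0) ∧
      (∑' j, if lam j ≤ A / t then φ j z * φ j w * Real.exp (-lam j * t) else 0) ≤
        (3 / 2) * (∑' j, φ j z * φ j w * Real.exp (-lam j * t)) :=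
  truncated_heat_kernel_comparable_general lam φ z w t ht d A C₁ C₂ habs hz hw hKz hKw hKzw hAC
end

section
/- For every d ≥ 1 and every c > 0, C > 0 there exists c' > 0, depending only on d, c and C, with the following property. Let p_1, …, p_d ∈ ℝ^d be unit vectors and v_1, …, v_d ∈ ℝ^d be vectors such that ⟨v_m, p_n⟩ = 0 whenever n > m, |⟨v_m, p_m⟩| ≥ c for every m, and ‖v_m‖ ≤ C for every m. Then p_1, …, p_d are linearly independent, and for every x ∈ ℝ^d one has (∑_{m=1}^d ⟨v_m, x⟩²)^{1/2} ≥ c' ‖x‖. -/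
open scoped RealInnerProductSpace

lemma aux_det {d : ℕ} {c : ℝ} (hd : 1 ≤ d) (hc : 0 < c)
    (p v : Fin d → EuclideanSpace ℝ (Fin d))
    (h2 : ∀ m n : Fin d, m < n → ⟪v m, p n⟫ = 0)
    (h3 : ∀ m : Fin d, c ≤ |⟪v m, p m⟫|) :
    LinearIndependent ℝ p ∧ ∀ x : EuclideanSpace ℝ (Fin d),
      (∀ m : Fin d, ⟪v m, x⟫ = 0) → x = 0 := by
  haveI : Nonempty (Fin d) := ⟨⟨0, hd⟩⟩
  set M : Matrix (Fin d) (Fin d) ℝ := fun m n => ⟪v m, p n⟫ with hMdef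
  have hdet : M.det ≠ 0 := by
    have : M.det = ∏ i, M i i := Matrix.det_of_lowerTriangular M
      (fun i j hij => h2 i j hij)
    rw [this]
    exact Finset.prod_ne_zero_iff.2 fun i _ => by
      have := h3 i; intro h; rw [hMdef] at h; simp [h] at this; linarith
  have key : ∀ (g : Fin d → ℝ) (x : EuclideanSpace ℝ (Fin d)),
      (∑ n, g n • p n) = x → (∀ m, ⟪v m, x⟫ = (0:ℝ)) → g = 0 := by
    intro g x hgx hx0
    apply Matrix.eq_zero_of_mulVec_eq_zero hdet
    funext m
    have h0 : ⟪v m, ∑ n, g n • p n⟫ = (0 : ℝ) := by rw [hgx]; exact hx0 m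
    rw [inner_sum] at h0
    simp_rw [real_inner_smul_right] at h0
    show ∑ n, M m n * g n = 0
    simp_rw [hMdef]
    simpa [mul_comm] using h0
  have hli : LinearIndependent ℝ p := by
    rw [Fintype.linearIndependent_iff]
    intro g hg i
    exact congrFun (key g 0 hg (by simp)) i
  refine ⟨hli, fun x hx => ?_⟩
  have hcard : Fintype.card (Fin d) = Module.finrank ℝ (EuclideanSpace ℝ (Fin d)) := by
    simp [finrank_euclideanSpace_fin]
  let b := basisOfLinearIndependentOfCardEqFinrank hli hcard
  have hb : ⇑b = p := coe_basisOfLinearIndependentOfCardEqFinrank hli hcard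
  have hrepr : ∑ n, b.repr x n • p n = x := by rw [← hb]; exact b.sum_repr x
  have hz : (fun n => b.repr x n) = 0 := key _ x hrepr hx
  rw [← hrepr]
  simp [congrFun hz]


/-- Quantitative linear algebra step: if the pairing matrix `(⟪v_m, p_n⟫)` is lower
triangular with diagonal entries at least `c` in absolute value, the `p_n` are unit vectors
and `‖v_m‖ ≤ C`, then the `p_n` are linearly independent and
`(∑_m ⟪v_m, x⟫²)^{1/2} ≥ c' ‖x‖` for a constant `c' > 0` depending only on `d, c, C`. -/
theorem lower_triangular_gradient_bound (d : ℕ) (hd : 1 ≤ d) (c C : ℝ)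
    (hc : 0 < c) (hC : 0 < C) :
    ∃ c' : ℝ, 0 < c' ∧
      ∀ p v : Fin d → EuclideanSpace ℝ (Fin d),
        (∀ i, ‖p i‖ = 1) →
        (∀ m n : Fin d, m < n → ⟪v m, p n⟫ = 0) →
        (∀ m : Fin d, c ≤ |⟪v m, p m⟫|) →
        (∀ m : Fin d, ‖v m‖ ≤ C) →
        LinearIndependent ℝ p ∧
          ∀ x : EuclideanSpace ℝ (Fin d),
            c' * ‖x‖ ≤ Real.sqrt (∑ m : Fin d, ⟪v m, x⟫ ^ 2) := by
  haveI : Nonempty (Fin d) := ⟨⟨0, hd⟩⟩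
  by_cases hcC : c ≤ C
  · -- compactness argument
    set S : Set ((Fin d → EuclideanSpace ℝ (Fin d)) × (Fin d → EuclideanSpace ℝ (Fin d)) × EuclideanSpace ℝ (Fin d)) :=
      {q | (∀ i, ‖q.1 i‖ = 1) ∧ (∀ m n : Fin d, m < n → ⟪q.2.1 m, q.1 n⟫ = 0) ∧
        (∀ m : Fin d, c ≤ |⟪q.2.1 m, q.1 m⟫|) ∧ (∀ m : Fin d, ‖q.2.1 m‖ ≤ C) ∧
        ‖q.2.2‖ = 1} with hS
    set f : ((Fin d → EuclideanSpace ℝ (Fin d)) × (Fin d → EuclideanSpace ℝ (Fin d)) × EuclideanSpace ℝ (Fin d)) → ℝ :=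
      fun q => ∑ m : Fin d, ⟪q.2.1 m, q.2.2⟫ ^ 2 with hf
    have hf_cont : Continuous f := by
      apply continuous_finset_sum
      intro m _
      exact (Continuous.inner ((continuous_apply m).comp (continuous_fst.comp continuous_snd))
        (continuous_snd.comp continuous_snd)).pow 2
    have hS_closed : IsClosed S := by
      have c1 : ∀ i : Fin d, IsClosed {q : (Fin d → EuclideanSpace ℝ (Fin d)) × (Fin d → EuclideanSpace ℝ (Fin d)) × EuclideanSpace ℝ (Fin d) | ‖q.1 i‖ = 1} :=
        fun i => isClosed_eq (continuous_norm.comp ((continuous_apply i).comp continuous_fst))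
          continuous_const
      have c2 : ∀ m n : Fin d, IsClosed {q : (Fin d → EuclideanSpace ℝ (Fin d)) × (Fin d → EuclideanSpace ℝ (Fin d)) × EuclideanSpace ℝ (Fin d) | ⟪q.2.1 m, q.1 n⟫ = (0:ℝ)} :=
        fun m n => isClosed_eq (Continuous.inner
          ((continuous_apply m).comp (continuous_fst.comp continuous_snd))
          ((continuous_apply n).comp continuous_fst)) continuous_const
      have c3 : ∀ m : Fin d, IsClosed {q : (Fin d → EuclideanSpace ℝ (Fin d)) × (Fin d → EuclideanSpace ℝ (Fin d)) × EuclideanSpace ℝ (Fin d) | c ≤ |⟪q.2.1 m, q.1 m⟫|} :=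
        fun m => isClosed_le continuous_const ((Continuous.inner
          ((continuous_apply m).comp (continuous_fst.comp continuous_snd))
          ((continuous_apply m).comp continuous_fst)).abs)
      have c4 : ∀ m : Fin d, IsClosed {q : (Fin d → EuclideanSpace ℝ (Fin d)) × (Fin d → EuclideanSpace ℝ (Fin d)) × EuclideanSpace ℝ (Fin d) | ‖q.2.1 m‖ ≤ C} :=
        fun m => isClosed_le (continuous_norm.comp
          ((continuous_apply m).comp (continuous_fst.comp continuous_snd))) continuous_const
      have c5 : IsClosed {q : (Fin d → EuclideanSpace ℝ (Fin d)) × (Fin d → EuclideanSpace ℝ (Fin d)) × EuclideanSpace ℝ (Fin d) | ‖q.2.2‖ = 1} :=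
        isClosed_eq (continuous_norm.comp (continuous_snd.comp continuous_snd)) continuous_const
      have : S = (⋂ i, {q : (Fin d → EuclideanSpace ℝ (Fin d)) × (Fin d → EuclideanSpace ℝ (Fin d)) × EuclideanSpace ℝ (Fin d) | ‖q.1 i‖ = 1}) ∩
          ((⋂ m, ⋂ n, {q | m < n → ⟪q.2.1 m, q.1 n⟫ = (0:ℝ)}) ∩
          ((⋂ m, {q | c ≤ |⟪q.2.1 m, q.1 m⟫|}) ∩
          ((⋂ m, {q | ‖q.2.1 m‖ ≤ C}) ∩ {q | ‖q.2.2‖ = 1}))) := by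
        ext q
        simp only [hS, Set.mem_setOf_eq, Set.mem_inter_iff, Set.mem_iInter]
      rw [this]
      refine (isClosed_iInter c1).inter ((isClosed_iInter fun m => isClosed_iInter fun n => ?_).inter
        ((isClosed_iInter c3).inter ((isClosed_iInter c4).inter c5)))
      by_cases h : m < n
      · simpa [h] using c2 m n
      · simp [h]
    have hS_bdd : S ⊆ Metric.closedBall 0 (max 1 C) := by
      intro q hq
      obtain ⟨hq1, _, _, hq4, hq5⟩ := hq
      rw [Metric.mem_closedBall, dist_zero_right]
      rw [Prod.norm_def, Prod.norm_def]
      refine max_le ?_ (max_le ?_ ?_)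
      · refine (pi_norm_le_iff_of_nonneg (by positivity)).2 fun i => ?_
        rw [hq1 i]; exact le_max_left _ _
      · refine (pi_norm_le_iff_of_nonneg (by positivity)).2 fun i => ?_
        exact (hq4 i).trans (le_max_right _ _)
      · rw [hq5]; exact le_max_left _ _
    have hS_cpt : IsCompact S := by
      exact (isCompact_closedBall _ _).of_isClosed_subset hS_closed hS_bdd
    have hS_ne : S.Nonempty := by
      refine ⟨(fun i => EuclideanSpace.single i 1, fun m => c • EuclideanSpace.single m 1,
        EuclideanSpace.single ⟨0, hd⟩ 1), ?_, ?_, ?_, ?_, ?_⟩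
      · intro i; simp [EuclideanSpace.norm_single]
      · intro m n hmn
        rw [real_inner_smul_left]
        simp [EuclideanSpace.inner_single_left, EuclideanSpace.single_apply, hmn.ne']
      · intro m
        rw [real_inner_smul_left]
        simp [EuclideanSpace.inner_single_left, EuclideanSpace.single_apply, abs_of_pos hc]
      · intro m
        rw [norm_smul]
        simp [EuclideanSpace.norm_single, abs_of_pos hc, hcC]
      · simp [EuclideanSpace.norm_single]
    obtain ⟨q0, hq0S, hq0min⟩ := hS_cpt.exists_isMinOn hS_ne hf_cont.continuousOn
    have hfq0 : 0 < f q0 := by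
      obtain ⟨hq1, hq2, hq3, hq4, hq5⟩ := hq0S
      rcases (Finset.sum_nonneg fun m _ => sq_nonneg (⟪q0.2.1 m, q0.2.2⟫ : ℝ)).lt_or_eq with h | h
      · exact h
      · exfalso
        have hall : ∀ m : Fin d, ⟪q0.2.1 m, q0.2.2⟫ = (0:ℝ) := by
          intro m
          have := (Finset.sum_eq_zero_iff_of_nonneg
            (fun m _ => sq_nonneg (⟪q0.2.1 m, q0.2.2⟫ : ℝ))).1 h.symm m (Finset.mem_univ m)
          exact sq_eq_zero_iff.1 this
        have := (aux_det hd hc q0.1 q0.2.1 hq2 hq3).2 q0.2.2 hall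
        rw [this] at hq5
        simp at hq5
    refine ⟨Real.sqrt (f q0), Real.sqrt_pos.2 hfq0, ?_⟩
    intro p v h1 h2 h3 h4
    refine ⟨(aux_det hd hc p v h2 h3).1, fun x => ?_⟩
    rcases eq_or_ne x 0 with rfl | hx
    · simp [Real.sqrt_nonneg]
    · set u : EuclideanSpace ℝ (Fin d) := ‖x‖⁻¹ • x with hu
      have hnu : ‖u‖ = 1 := norm_smul_inv_norm hx
      have hmem : ((p, v, u) : (Fin d → EuclideanSpace ℝ (Fin d)) × (Fin d → EuclideanSpace ℝ (Fin d)) × EuclideanSpace ℝ (Fin d)) ∈ S := ⟨h1, h2, h3, h4, hnu⟩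
      have hle : f q0 ≤ f (p, v, u) := isMinOn_iff.1 hq0min _ hmem
      rw [hf] at hle
      simp only at hle
      have hxu : ∀ m : Fin d, ⟪v m, x⟫ = ‖x‖ * ⟪v m, u⟫ := by
        intro m
        rw [hu, real_inner_smul_right, ← mul_assoc,
          mul_inv_cancel₀ (norm_ne_zero_iff.2 hx), one_mul]
      have : ∑ m : Fin d, ⟪v m, x⟫ ^ 2 = ‖x‖ ^ 2 * ∑ m : Fin d, ⟪v m, u⟫ ^ 2 := by
        rw [Finset.mul_sum]
        refine Finset.sum_congr rfl fun m _ => by rw [hxu m]; ring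
      rw [this]
      calc Real.sqrt (f q0) * ‖x‖ ≤ Real.sqrt (∑ m : Fin d, ⟪v m, u⟫ ^ 2) * ‖x‖ := by
            exact mul_le_mul_of_nonneg_right (Real.sqrt_le_sqrt hle) (norm_nonneg x)
        _ = Real.sqrt (‖x‖ ^ 2 * ∑ m : Fin d, ⟪v m, u⟫ ^ 2) := by
            rw [Real.sqrt_mul (by positivity), Real.sqrt_sq (norm_nonneg x)]
            ring
  · -- impossible hypotheses: c > C
    refine ⟨1, one_pos, ?_⟩
    intro p v h1 h2 h3 h4
    exfalso
    have m0 : Fin d := ⟨0, hd⟩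
    have h5 : |⟪v m0, p m0⟫| ≤ ‖v m0‖ * ‖p m0‖ := abs_real_inner_le_norm _ _
    rw [h1 m0, mul_one] at h5
    have := (h3 m0).trans (h5.trans (h4 m0))
    linarith [not_le.1 hcC]
end
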